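/- arXiv:1705.10625 — 4 statements merged into one kernel-verified Lean document; each statement's English description precedes it below -/
import Mathlib

section
/- Let A be a trim deterministic block automaton over a finite alphabet Σ. Then for every state p of A there exists a word u ∈ Σ* such that the right language of p equals the left quotient u⁻¹L_A, and this left quotient is nonempty. (In the paper's terms: every state of A is equivalent to a state of the minimal DFA of L_A.) -/
set_option autoImplicit false

/-- A block automaton over an alphabet `α`: a set of initial states, a set of final
states, and a set of transitions labeled by words over `α`. -/
structure BlockAutomaton (α : Type) (Q : Type) where
  init : Set Q
  final : Set Q
  trans : Set (Q × List α × Q)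

namespace BlockAutomaton

variable {α Q : Type}

/-- Well-formedness: the transition set is finite and every label is a block
(a nonempty word). -/
def IsWF (A : BlockAutomaton α Q) : Prop :=
  A.trans.Finite ∧ ∀ t ∈ A.trans, t.2.1 ≠ ([] : List α)

/-- The transitive closure `δ*` of the transition relation. -/
inductive Path (A : BlockAutomaton α Q) : Q → List α → Q → Prop
  | refl (p : Q) : Path A p [] p
  | step {p r q : Q} {b u : List α} :
      (p, b, r) ∈ A.trans → Path A r u q → Path A p (b ++ u) q

/-- The right language of a state. -/
def rightLang (A : BlockAutomaton α Q) (q : Q) : Language α :=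
  {w | ∃ f ∈ A.final, A.Path q w f}

/-- The language recognized by the automaton. -/
def lang (A : BlockAutomaton α Q) : Language α :=
  {w | ∃ i ∈ A.init, ∃ f ∈ A.final, A.Path i w f}

/-- Deterministic: a unique initial state, and the labels of two distinct transitions
going out of the same state are never prefixes of one another. -/
def Deterministic (A : BlockAutomaton α Q) : Prop :=
  (∃ i, A.init = {i}) ∧
    ∀ p b₁ q₁ b₂ q₂, (p, b₁, q₁) ∈ A.trans → (p, b₂, q₂) ∈ A.trans →
      (b₁, q₁) ≠ (b₂, q₂) → ¬ b₁ <+: b₂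

/-- Trim: every state is accessible and co-accessible. -/
def Trim (A : BlockAutomaton α Q) : Prop :=
  ∀ q : Q, (∃ i ∈ A.init, ∃ u, A.Path i u q) ∧ (∃ f ∈ A.final, ∃ v, A.Path q v f)

/-- `k`-block: every transition label has length at most `k`. -/
def KBlock (A : BlockAutomaton α Q) (k : ℕ) : Prop :=
  ∀ t ∈ A.trans, t.2.1.length ≤ k

/-- Compact: no two distinct states have the same right language. -/
def Compact (A : BlockAutomaton α Q) : Prop :=
  ∀ p q : Q, A.rightLang p = A.rightLang q → p = q

/-- Left quotient `u⁻¹L` of a language by a word. -/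
def leftQuot (u : List α) (L : Language α) : Language α := {w | u ++ w ∈ L}

/-- Residual: every right language is a left quotient of the recognized language. -/
def Residual (A : BlockAutomaton α Q) : Prop :=
  ∀ p : Q, ∃ u : List α, A.rightLang p = leftQuot u A.lang

/-- L-equivalence: same language and same family of right languages. -/
def LEquiv {Q₁ Q₂ : Type} (A : BlockAutomaton α Q₁) (B : BlockAutomaton α Q₂) : Prop :=
  A.lang = B.lang ∧ Set.range A.rightLang = Set.range B.rightLang

/-- The set of final labels FB(A). -/
def finalLabels (A : BlockAutomaton α Q) : Set (List α) :=
  {b | ∃ f ∈ A.final, ∃ q, (f, b, q) ∈ A.trans}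

/-- The set of consistency C(A): pairs (b, s) with b a block such that every final
state has a transition labeled b to s. -/
def consist (A : BlockAutomaton α Q) : Set (List α × Q) :=
  {bs | bs.1 ≠ [] ∧ ∀ f ∈ A.final, (f, bs.1, bs.2) ∈ A.trans}

/-- The (b,s)-cut: remove every transition (f, b, s) with f final. -/
def cut (A : BlockAutomaton α Q) (b : List α) (s : Q) : BlockAutomaton α Q :=
  ⟨A.init, A.final, {t ∈ A.trans | ¬(t.1 ∈ A.final ∧ t.2.1 = b ∧ t.2.2 = s)}⟩

/-- (b, s) is a vacant pair: b is a block and no final state has a transition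
labeled b to s. -/
def Vacant (A : BlockAutomaton α Q) (b : List α) (s : Q) : Prop :=
  b ≠ [] ∧ ∀ f ∈ A.final, (f, b, s) ∉ A.trans

/-- The (b,s)-add: add the transition (f, b, s) for every final state f. -/
def add (A : BlockAutomaton α Q) (b : List α) (s : Q) : BlockAutomaton α Q :=
  ⟨A.init, A.final, A.trans ∪ {t | t.1 ∈ A.final ∧ t.2.1 = b ∧ t.2.2 = s}⟩

/-- The underlying edge relation of the automaton. -/
def Edge (A : BlockAutomaton α Q) (p q : Q) : Prop := ∃ b, (p, b, q) ∈ A.trans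

/-- Reachability. -/
def Reach (A : BlockAutomaton α Q) : Q → Q → Prop := Relation.ReflTransGen A.Edge

/-- The orbit (strongly connected component) of a state. -/
def orbitOf (A : BlockAutomaton α Q) (q : Q) : Set Q := {p | A.Reach q p ∧ A.Reach p q}

/-- A set is an orbit if it is the strongly connected component of some state. -/
def IsOrbit (A : BlockAutomaton α Q) (O : Set Q) : Prop := ∃ q, O = A.orbitOf q

/-- A trivial orbit: a single state with no self-loop. -/
def TrivialOrbit (A : BlockAutomaton α Q) (O : Set Q) : Prop :=
  ∃ p, O = {p} ∧ ∀ b, (p, b, p) ∉ A.trans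

/-- A non re-entering component: a union of orbits such that no state outside
reachable from it can reach back. -/
def NonReentering (A : BlockAutomaton α Q) (R : Set Q) : Prop :=
  (∀ p ∈ R, A.orbitOf p ⊆ R) ∧
    ∀ r ∈ R, ∀ q, q ∉ R → A.Reach r q → ¬ A.Reach q r

/-- A gate of R: a state of R that is final or the origin of an out-transition. -/
def IsGate (A : BlockAutomaton α Q) (R : Set Q) (g : Q) : Prop :=
  g ∈ R ∧ (g ∈ A.final ∨ ∃ b p, (g, b, p) ∈ A.trans ∧ p ∉ R)

/-- R is transverse: all gates agree on finality and on out-transitions. -/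
def Transverse (A : BlockAutomaton α Q) (R : Set Q) : Prop :=
  ∀ g₁ g₂, A.IsGate R g₁ → A.IsGate R g₂ →
    (g₁ ∈ A.final ↔ g₂ ∈ A.final) ∧
      ∀ b p, p ∉ R → ((g₁, b, p) ∈ A.trans ↔ (g₂, b, p) ∈ A.trans)

/-- The orbit property: every orbit is transverse. -/
def OrbitProperty (A : BlockAutomaton α Q) : Prop :=
  ∀ O : Set Q, A.IsOrbit O → A.Transverse O

/-- The restriction of the automaton to the internal transitions of R. -/
def internalAut (A : BlockAutomaton α Q) (R : Set Q) : BlockAutomaton α Q :=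
  ⟨A.init, A.final, {t ∈ A.trans | t.1 ∈ R ∧ t.2.2 ∈ R}⟩

/-- The internal language of a state of R: words sending it to a gate of R
through internal transitions. -/
def Lin (A : BlockAutomaton α Q) (R : Set Q) (p : Q) : Language α :=
  {w | ∃ g, A.IsGate R g ∧ (A.internalAut R).Path p w g}

/-- The external language of a state of R. -/
def Lext (A : BlockAutomaton α Q) (R : Set Q) (p : Q) : Language α :=
  {w | (p ∈ A.final ∧ w = []) ∨
    ∃ b q, (p, b, q) ∈ A.trans ∧ q ∉ R ∧ ∃ v, v ∈ A.rightLang q ∧ w = b ++ v}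

/-- The external language of R: the (common, when R is transverse) external
language of the gates of R (empty if R has no gate). -/
def Lout (A : BlockAutomaton α Q) (R : Set Q) : Language α :=
  {w | ∃ g, A.IsGate R g ∧ w ∈ A.Lext R g}

/-- The automaton B_O of an orbit O used in the BW-test: transitions are the internal
transitions of O, final states are the gates of O (the initial states are irrelevant). -/
def orbAut (A : BlockAutomaton α Q) (O : Set Q) : BlockAutomaton α Q :=
  ⟨A.init, {g | A.IsGate O g}, {t ∈ A.trans | t.1 ∈ O ∧ t.2.2 ∈ O}⟩

/-- Fuel-indexed version of the BW-test (each recursive call removes at least one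
transition, so on automata with finitely many transitions the recursion needs only
finitely much fuel). -/
def BWTestFuel : ℕ → BlockAutomaton α Q → Prop
  | 0, _ => False
  | n + 1, A => A.OrbitProperty ∧
      ∀ O : Set Q, A.IsOrbit O → ¬ A.TrivialOrbit O →
        ∃ b s, (b, s) ∈ (A.orbAut O).consist ∧ BWTestFuel n ((A.orbAut O).cut b s)

/-- The BW-test: A passes iff A has the orbit property and, for every nontrivial
orbit O of A, some consistent cut of the automaton B_O of the orbit passes the
BW-test (well-founded since every cut removes a transition; `BWTestFuel` is
monotone in the fuel, so the existential gives exactly this recursive predicate). -/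
def BWTest (A : BlockAutomaton α Q) : Prop := ∃ n, BWTestFuel n A

/-- The orbit automaton Orb(A, q): states are the orbit of q, initial state q, final
states the gates of the orbit, transitions the internal transitions of the orbit. -/
def orbAutAt (A : BlockAutomaton α Q) (q : Q) :
    BlockAutomaton α {p : Q // p ∈ A.orbitOf q} where
  init := {x | x.val = q}
  final := {x | A.IsGate (A.orbitOf q) x.val}
  trans := {t | (t.1.val, t.2.1, t.2.2.val) ∈ A.trans}

/-- The pathway function Δ. -/
def pathway (A : BlockAutomaton α Q) (p : Q) (u : List α) : Set (List α × Q) :=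
  {vq | A.Path p (u ++ vq.1) vq.2 ∧
    ∀ x, x <+: vq.1 → x ≠ vq.1 → ∀ r, ¬ A.Path p (u ++ x) r}

/-- The states of the minimal DFA of L: the nonempty left quotients of L. -/
def QuotState (L : Language α) : Type :=
  {P : Language α // (∃ u : List α, P = leftQuot u L) ∧ ∃ w, w ∈ P}

/-- The minimal DFA of L. -/
def minDFA (L : Language α) : BlockAutomaton α (QuotState L) where
  init := {P | P.val = L}
  final := {P | [] ∈ P.val}
  trans := {t | ∃ a : α, t.2.1 = [a] ∧ t.2.2.val = leftQuot [a] t.1.val}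

/-- The k-transition automaton of L. -/
def kTransAut (L : Language α) (k : ℕ) : BlockAutomaton α (QuotState L) where
  init := (minDFA L).init
  final := (minDFA L).final
  trans := {t | (minDFA L).Path t.1 t.2.1 t.2.2 ∧ 1 ≤ t.2.1.length ∧ t.2.1.length ≤ k ∧
    ∀ u, u <+: t.2.1 → u ≠ [] → u ≠ t.2.1 → u ∉ t.1.val}

/-- B is isomorphic to a sub-automaton of T. -/
def IsoToSub {Q₁ Q₂ : Type} (B : BlockAutomaton α Q₁) (T : BlockAutomaton α Q₂) : Prop :=
  ∃ φ : Q₁ → Q₂, Function.Injective φ ∧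
    φ '' B.init ⊆ T.init ∧ φ '' B.final ⊆ T.final ∧
    ∀ p b q, (p, b, q) ∈ B.trans → (φ p, b, φ q) ∈ T.trans

/-- Isomorphism of block automata. -/
def Isomorphic {Q₁ Q₂ : Type} (B : BlockAutomaton α Q₁) (C : BlockAutomaton α Q₂) : Prop :=
  ∃ φ : Q₁ ≃ Q₂, φ '' B.init = C.init ∧ φ '' B.final = C.final ∧
    ∀ p b q, ((p, b, q) ∈ B.trans ↔ (φ p, b, φ q) ∈ C.trans)

/-- The substitution of B for the orbit O(q) of A via h (iA is the unique initial
state of A). -/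
def substAut {QB : Type} (A : BlockAutomaton α Q) (iA q : Q)
    (B : BlockAutomaton α QB) (h : Q → QB) :
    BlockAutomaton α ({p : Q // p ∉ A.orbitOf q} ⊕ QB) where
  init := {x | (iA ∈ A.orbitOf q ∧ x = Sum.inr (h iA)) ∨
    ∃ hp : iA ∉ A.orbitOf q, x = Sum.inl ⟨iA, hp⟩}
  final := {x | (∃ p, ∃ hp : p ∉ A.orbitOf q, p ∈ A.final ∧ x = Sum.inl ⟨p, hp⟩) ∨
    ((∃ f ∈ A.final, f ∈ A.orbitOf q) ∧ ∃ fB ∈ B.final, x = Sum.inr fB)}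
  trans := {t |
    (∃ p r b, ∃ hp : p ∉ A.orbitOf q, ∃ hr : r ∉ A.orbitOf q,
      (p, b, r) ∈ A.trans ∧ t = (Sum.inl ⟨p, hp⟩, b, Sum.inl ⟨r, hr⟩)) ∨
    (∃ p r b, (p, b, r) ∈ B.trans ∧ t = (Sum.inr p, b, Sum.inr r)) ∨
    (∃ p o b, ∃ hp : p ∉ A.orbitOf q,
      (p, b, o) ∈ A.trans ∧ o ∈ A.orbitOf q ∧ t = (Sum.inl ⟨p, hp⟩, b, Sum.inr (h o))) ∨
    (∃ fB o p b, ∃ hp : p ∉ A.orbitOf q, fB ∈ B.final ∧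
      (o, b, p) ∈ A.trans ∧ o ∈ A.orbitOf q ∧ t = (Sum.inr fB, b, Sum.inl ⟨p, hp⟩))}

theorem Path.trans' {α Q : Type} {A : BlockAutomaton α Q} {p q r : Q} {u v : List α}
    (h1 : A.Path p u q) (h2 : A.Path q v r) : A.Path p (u ++ v) r := by
  induction h1 with
  | refl => simpa
  | step ht _ ih => rw [List.append_assoc]; exact Path.step ht (ih h2)

theorem path_det {α Q : Type} {A : BlockAutomaton α Q} (hwf : A.IsWF)
    (hdet : A.Deterministic) {p q f : Q} {u w : List α}
    (h1 : A.Path p u q) (h2 : A.Path p (u ++ w) f) : A.Path q w f := by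
  induction h1 with
  | refl => simpa using h2
  | @step p r q b u' ht _ ih =>
    rw [List.append_assoc] at h2
    generalize heq : b ++ (u' ++ w) = x at h2
    cases h2 with
    | refl =>
      exact absurd (List.append_eq_nil_iff.mp heq).1 (hwf.2 _ ht)
    | @step _ r₂ _ b₂ rest ht₂ hp₂ =>
      have hbb : (b, r) = (b₂, r₂) := by
        by_contra hne
        have h1 := hdet.2 _ _ _ _ _ ht ht₂ hne
        have h2' := hdet.2 _ _ _ _ _ ht₂ ht (fun h => hne h.symm)
        have pb : b <+: b ++ (u' ++ w) := List.prefix_append _ _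
        have pb2 : b₂ <+: b ++ (u' ++ w) := by rw [heq]; exact List.prefix_append _ _
        rcases List.prefix_or_prefix_of_prefix pb pb2 with h | h
        · exact h1 h
        · exact h2' h
      obtain ⟨hb, hr⟩ := Prod.mk.injEq .. ▸ hbb
      subst hb; subst hr
      have : u' ++ w = rest := List.append_cancel_left heq
      subst this
      exact ih hp₂

end BlockAutomaton

/-- In a trim deterministic block automaton, the right language of every
state is a nonempty left quotient of the recognized language (i.e., every state is
equivalent to a state of the minimal DFA of `L_A`). -/
theorem stmt0 {α Q : Type} [Fintype α] [Fintype Q]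
    (A : BlockAutomaton α Q) (hwf : A.IsWF) (htrim : A.Trim) (hdet : A.Deterministic) :
    ∀ p : Q, ∃ u : List α,
      A.rightLang p = BlockAutomaton.leftQuot u A.lang ∧
      ∃ v, v ∈ BlockAutomaton.leftQuot u A.lang := by
  intro p
  obtain ⟨i, hi⟩ := hdet.1
  obtain ⟨⟨i', hi', u, hu⟩, ⟨f, hf, v, hv⟩⟩ := htrim p
  rw [hi] at hi'; cases hi'
  refine ⟨u, ?_, ?_⟩
  · ext w
    constructor
    · rintro ⟨f', hf', hp⟩
      exact ⟨i, by rw [hi]; rfl, f', hf', hu.trans' hp⟩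
    · rintro ⟨i₂, hi₂, f', hf', hp⟩
      rw [hi] at hi₂; cases hi₂
      exact ⟨f', hf', BlockAutomaton.path_det hwf hdet hu hp⟩
  · exact ⟨v, i, by rw [hi]; rfl, f, hf, hu.trans' hv⟩
end

section
/- Let A be a trim deterministic block automaton over a finite alphabet Σ recognizing the language L = L_A. Then the family of right languages of the final states of A equals the family of left quotients of L by words of L: {L(f) | f ∈ F} = {u⁻¹L | u ∈ L}. (In the paper's terms: Φ(F_A) = F_M, where M is the minimal DFA of L and Φ sends each state of A to its equivalent state of M.) -/
set_option autoImplicit false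

namespace BlockAutomaton

variable {α Q : Type}

lemma path_append' {A : BlockAutomaton α Q} {p q r : Q} {u w : List α}
    (h1 : A.Path p u q) (h2 : A.Path q w r) : A.Path p (u ++ w) r := by
  induction h1 with
  | refl => simpa using h2
  | step ht _ ih => rw [List.append_assoc]; exact Path.step ht (ih h2)

lemma path_decomp {A : BlockAutomaton α Q} {p r : Q} {v : List α}
    (hne : v ≠ []) (h : A.Path p v r) :
    ∃ b u q, (p, b, q) ∈ A.trans ∧ A.Path q u r ∧ v = b ++ u := by
  cases h with
  | refl => exact absurd rfl hne
  | step ht hp => exact ⟨_, _, _, ht, hp, rfl⟩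

lemma det_split {A : BlockAutomaton α Q} (hwf : A.IsWF) (hdet : A.Deterministic)
    {p q : Q} {u : List α} (h1 : A.Path p u q) :
    ∀ {w : List α} {r : Q}, A.Path p (u ++ w) r → A.Path q w r := by
  induction h1 with
  | refl => intro w r h2; simpa using h2
  | @step p' r' q' b u' ht hp ih =>
    intro w r h2
    rw [List.append_assoc] at h2
    have hbne : b ≠ [] := hwf.2 _ ht
    have hvne : b ++ (u' ++ w) ≠ [] := by
      intro hc; exact hbne (List.append_eq_nil_iff.mp hc).1
    obtain ⟨b₂, u₂, q₂, ht₂, hp₂, heq⟩ := path_decomp hvne h2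
    have heqpair : (b, r') = (b₂, q₂) := by
      by_contra hne
      have hpre : b <+: b₂ ∨ b₂ <+: b := by
        rcases List.prefix_or_prefix_of_prefix (⟨u' ++ w, rfl⟩ : b <+: b ++ (u' ++ w))
          (⟨u₂, heq.symm⟩ : b₂ <+: b ++ (u' ++ w)) with h | h
        · exact Or.inl h
        · exact Or.inr h
      rcases hpre with h | h
      · exact hdet.2 _ _ _ _ _ ht ht₂ hne h
      · exact hdet.2 _ _ _ _ _ ht₂ ht (fun hc => hne hc.symm) h
    obtain ⟨rfl, rfl⟩ : b = b₂ ∧ r' = q₂ := by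
      constructor <;> [exact congrArg Prod.fst heqpair; exact congrArg Prod.snd heqpair]
    have hu₂ : u₂ = u' ++ w := (List.append_cancel_left heq).symm
    subst hu₂
    exact ih hp₂

end BlockAutomaton

/-- In a trim deterministic block automaton recognizing `L`, the family of
right languages of the final states equals the family of left quotients of `L` by the
words of `L`. -/
theorem stmt2 {α Q : Type} [Fintype α] [Fintype Q]
    (A : BlockAutomaton α Q) (hwf : A.IsWF) (htrim : A.Trim) (hdet : A.Deterministic) :
    {P : Language α | ∃ f ∈ A.final, P = A.rightLang f} =
      {P : Language α | ∃ u ∈ A.lang, P = BlockAutomaton.leftQuot u A.lang} := by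
  obtain ⟨i, hi⟩ := hdet.1
  have key : ∀ {u : List α} {f : Q}, A.Path i u f → f ∈ A.final →
      A.rightLang f = BlockAutomaton.leftQuot u A.lang := by
    intro u f hpath hf
    ext w
    constructor
    · rintro ⟨f', hf', hp⟩
      exact ⟨i, by rw [hi]; rfl, f', hf', BlockAutomaton.path_append' hpath hp⟩
    · rintro ⟨i', hi', f', hf', hp⟩
      have : i' = i := by rw [hi] at hi'; exact hi'
      subst this
      exact ⟨f', hf', BlockAutomaton.det_split hwf hdet hpath hp⟩
  ext P
  constructor
  · rintro ⟨f, hf, rfl⟩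
    obtain ⟨⟨i', hi', u, hpath⟩, _⟩ := htrim f
    have : i' = i := by rw [hi] at hi'; exact hi'
    subst this
    exact ⟨u, ⟨i', by rw [hi]; rfl, f, hf, hpath⟩, key hpath hf⟩
  · rintro ⟨u, ⟨i', hi', f, hf, hpath⟩, rfl⟩
    have : i' = i := by rw [hi] at hi'; exact hi'
    subst this
    exact ⟨f, hf, (key hpath hf).symm⟩
end

section
/- Let L be a nonempty regular language over a finite alphabet Σ, let k ≥ 1, and let T be the k-transition automaton of L. Let B be a trim deterministic k-block automaton recognizing L. Then B is compact if and only if B is isomorphic to a sub-automaton of T. -/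
set_option autoImplicit false

/-!
In a trim deterministic block automaton the right language of a state reached by `u` is
`u⁻¹L`, and a transition `p –b→ q` gives `L(q) = b⁻¹L(p)` with no proper nonempty prefix of `b`
in `L(p)`. Hence `p ↦ L(p)` maps `B` into the `k`-transition automaton `T`, injectively exactly
when `B` is compact. Conversely, a morphism into `T` is in particular one into the minimal DFA,
so once it sends the initial state to `L` it must send every accessible state `p` to `L(p)`;
injectivity then forces compactness.
-/

namespace BlockAutomaton

variable {α Q : Type} {A : BlockAutomaton α Q}

lemma Path.single {p q : Q} {b : List α} (ht : (p, b, q) ∈ A.trans) : A.Path p b q := by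
  simpa using Path.step ht (Path.refl q)

lemma Path.append {p q r : Q} {u v : List α} (h₁ : A.Path p u q) (h₂ : A.Path q v r) :
    A.Path p (u ++ v) r := by
  induction h₁ with
  | refl => simpa using h₂
  | step ht _ ih => rw [List.append_assoc]; exact Path.step ht (ih h₂)

lemma Path.map {Q₂ : Type} {T : BlockAutomaton α Q₂} {φ : Q → Q₂}
    (hφ : ∀ p b q, (p, b, q) ∈ A.trans → T.Path (φ p) b (φ q)) {p q : Q} {u : List α}
    (h : A.Path p u q) : T.Path (φ p) u (φ q) := by
  induction h with
  | refl => exact Path.refl _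
  | step ht _ ih => exact (hφ _ _ _ ht).append ih

lemma Deterministic.eq_of_prefix (hdet : A.Deterministic) {p q₁ q₂ : Q} {b₁ b₂ : List α}
    (h₁ : (p, b₁, q₁) ∈ A.trans) (h₂ : (p, b₂, q₂) ∈ A.trans) (hb : b₁ <+: b₂) :
    b₁ = b₂ ∧ q₁ = q₂ := by
  by_contra hne
  exact hdet.2 p b₁ q₁ b₂ q₂ h₁ h₂ (fun h => hne (Prod.mk.inj h)) hb

lemma Deterministic.eq_of_prefix_of_prefix (hdet : A.Deterministic) {p q₁ q₂ : Q}
    {b₁ b₂ w : List α} (h₁ : (p, b₁, q₁) ∈ A.trans) (h₂ : (p, b₂, q₂) ∈ A.trans)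
    (hb₁ : b₁ <+: w) (hb₂ : b₂ <+: w) : b₁ = b₂ ∧ q₁ = q₂ := by
  rcases List.prefix_or_prefix_of_prefix hb₁ hb₂ with h | h
  · exact hdet.eq_of_prefix h₁ h₂ h
  · obtain ⟨hb, hq⟩ := hdet.eq_of_prefix h₂ h₁ h
    exact ⟨hb.symm, hq.symm⟩

lemma Deterministic.path_of_path_append (hwf : A.IsWF) (hdet : A.Deterministic)
    {p q f : Q} {u w : List α} (h₁ : A.Path p u q) (h₂ : A.Path p (u ++ w) f) :
    A.Path q w f := by
  induction h₁ with
  | refl => simpa using h₂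
  | @step p r q b u ht _ ih =>
    rw [List.append_assoc] at h₂
    generalize hx : b ++ (u ++ w) = x at h₂
    cases h₂ with
    | refl => exact absurd (List.append_eq_nil_iff.mp hx).1 (hwf.2 _ ht)
    | @step _ r' _ b' u' ht' h' =>
      obtain ⟨rfl, rfl⟩ := hdet.eq_of_prefix_of_prefix ht ht' ⟨u ++ w, hx⟩ ⟨u', rfl⟩
      exact ih (List.append_cancel_left hx ▸ h')

lemma not_mem_rightLang_of_proper_prefix (hdet : A.Deterministic) {p q : Q} {b v : List α}
    (ht : (p, b, q) ∈ A.trans) (hv : v <+: b) (hv_ne : v ≠ []) (hvb : v ≠ b) :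
    v ∉ A.rightLang p := by
  rintro ⟨f, -, hpath⟩
  cases hpath with
  | refl => exact hv_ne rfl
  | step ht' _ =>
    obtain ⟨rfl, -⟩ := hdet.eq_of_prefix ht' ht (List.prefix_append _ _ |>.trans hv)
    exact hvb (hv.eq_of_length (le_antisymm hv.length_le (List.prefix_append _ _).length_le))

lemma leftQuot_append (u v : List α) (L : Language α) :
    leftQuot (u ++ v) L = leftQuot v (leftQuot u L) := by
  ext w
  show (u ++ v) ++ w ∈ L ↔ u ++ (v ++ w) ∈ L
  rw [List.append_assoc]

lemma rightLang_of_path (hwf : A.IsWF) (hdet : A.Deterministic) {p q : Q} {u : List α}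
    (h : A.Path p u q) : A.rightLang q = leftQuot u (A.rightLang p) := by
  ext w
  constructor
  · rintro ⟨f, hf, hw⟩
    exact ⟨f, hf, h.append hw⟩
  · rintro ⟨f, hf, hw⟩
    exact ⟨f, hf, hdet.path_of_path_append hwf h hw⟩

lemma lang_eq_rightLang {i : Q} (hinit : A.init = {i}) : A.lang = A.rightLang i := by
  ext w
  simp [lang, rightLang, hinit]

lemma Trim.rightLang_nonempty (htrim : A.Trim) (p : Q) : ∃ w, w ∈ A.rightLang p := by
  obtain ⟨-, f, hf, v, hv⟩ := htrim p
  exact ⟨v, f, hf, hv⟩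

lemma Trim.residual (hwf : A.IsWF) (hdet : A.Deterministic) (htrim : A.Trim) :
    A.Residual := by
  intro p
  obtain ⟨i, hinit⟩ := hdet.1
  obtain ⟨⟨i', hi', u, hu⟩, -⟩ := htrim p
  obtain rfl : i' = i := by rwa [hinit] at hi'
  exact ⟨u, by rw [rightLang_of_path hwf hdet hu, lang_eq_rightLang hinit]⟩

lemma minDFA_path_iff {L : Language α} {P R : QuotState L} {w : List α} :
    (minDFA L).Path P w R ↔ R.val = leftQuot w P.val := by
  constructor
  · intro h
    induction h with
    | refl => rfl
    | step ht _ ih =>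
      obtain ⟨a, rfl, hval⟩ := ht
      rw [leftQuot_append, ← hval, ih]
  · induction w generalizing P with
    | nil =>
      intro hR
      obtain rfl : R = P := Subtype.ext hR
      exact Path.refl R
    | cons a w ih =>
      intro hR
      rw [← List.singleton_append, leftQuot_append] at hR
      obtain ⟨⟨u, hu⟩, -⟩ := P.2
      obtain ⟨x, hx⟩ := R.2.2
      rw [hR] at hx
      let M : QuotState L :=
        ⟨leftQuot [a] P.val, ⟨u ++ [a], by rw [hu, leftQuot_append]⟩, w ++ x, hx⟩
      have hstep : (P, [a], M) ∈ (minDFA L).trans := ⟨a, rfl, rfl⟩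
      exact Path.step hstep (ih hR)

theorem isoToSub_kTransAut_of_compact (hwf : A.IsWF) (hdet : A.Deterministic)
    (htrim : A.Trim) {k : ℕ} (hkb : A.KBlock k) (hcomp : A.Compact) :
    A.IsoToSub (kTransAut A.lang k) := by
  obtain ⟨i, hinit⟩ := hdet.1
  refine ⟨fun p => ⟨A.rightLang p, htrim.residual hwf hdet p, htrim.rightLang_nonempty p⟩,
    fun p q h => hcomp p q (congrArg Subtype.val h), ?_, ?_, ?_⟩
  · rintro _ ⟨p, hp, rfl⟩
    obtain rfl : p = i := by rwa [hinit] at hp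
    exact (lang_eq_rightLang hinit).symm
  · rintro _ ⟨p, hp, rfl⟩
    exact ⟨p, hp, Path.refl p⟩
  · intro p b q ht
    exact ⟨minDFA_path_iff.mpr (rightLang_of_path hwf hdet (Path.single ht)),
      List.length_pos_iff.mpr (hwf.2 _ ht), hkb _ ht,
      fun v hv hv_ne hvb => not_mem_rightLang_of_proper_prefix hdet ht hv hv_ne hvb⟩

theorem val_eq_rightLang_of_hom_minDFA (hwf : A.IsWF) (hdet : A.Deterministic)
    (htrim : A.Trim) {φ : Q → QuotState A.lang} (hφ_init : φ '' A.init ⊆ (minDFA A.lang).init)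
    (hφ : ∀ p b q, (p, b, q) ∈ A.trans → (minDFA A.lang).Path (φ p) b (φ q)) (p : Q) :
    (φ p).val = A.rightLang p := by
  obtain ⟨⟨i, hi, u, hu⟩, -⟩ := htrim p
  have hφi : (φ i).val = A.lang := hφ_init ⟨i, hi, rfl⟩
  obtain ⟨i', hinit⟩ := hdet.1
  obtain rfl : i = i' := by rwa [hinit] at hi
  rw [minDFA_path_iff.mp (hu.map hφ), hφi, rightLang_of_path hwf hdet hu,
    lang_eq_rightLang hinit]

theorem compact_of_isoToSub_kTransAut (hwf : A.IsWF) (hdet : A.Deterministic)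
    (htrim : A.Trim) {k : ℕ} (h : A.IsoToSub (kTransAut A.lang k)) : A.Compact := by
  obtain ⟨φ, hinj, hφ_init, -, hφ⟩ := h
  have hval := val_eq_rightLang_of_hom_minDFA hwf hdet htrim hφ_init
    fun p b q ht => (hφ p b q ht).1
  intro p q hpq
  exact hinj (Subtype.ext (by rw [hval p, hval q, hpq]))

end BlockAutomaton

theorem stmt3_general {α QB : Type}
    (L : Language α) (k : ℕ)
    (B : BlockAutomaton α QB) (hwf : B.IsWF) (htrim : B.Trim)
    (hdet : B.Deterministic) (hkb : B.KBlock k) (hlang : B.lang = L) :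
    B.Compact ↔ B.IsoToSub (BlockAutomaton.kTransAut L k) := by
  subst hlang
  exact ⟨BlockAutomaton.isoToSub_kTransAut_of_compact hwf hdet htrim hkb,
    BlockAutomaton.compact_of_isoToSub_kTransAut hwf hdet htrim⟩

/-- A trim deterministic k-block automaton recognizing a nonempty regular
language L is compact iff it is isomorphic to a sub-automaton of the k-transition
automaton of L. -/
theorem stmt3 {α QB : Type} [Fintype α] [Fintype QB]
    (L : Language α) (hreg : L.IsRegular) (hne : ∃ w, w ∈ L) (k : ℕ) (hk : 1 ≤ k)
    (B : BlockAutomaton α QB) (hwf : B.IsWF) (htrim : B.Trim)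
    (hdet : B.Deterministic) (hkb : B.KBlock k) (hlang : B.lang = L) :
    B.Compact ↔ B.IsoToSub (BlockAutomaton.kTransAut L k) :=
  stmt3_general L k B hwf htrim hdet hkb hlang
end

section
/- Let A be a block automaton over a finite alphabet Σ that passes the BW-test. Then for every state q of A, the orbit automaton Orb(A, q) passes the BW-test. -/
set_option autoImplicit false

namespace BlockAutomaton

variable {α Q : Type}

/-- Auxiliary relation: `C` (on the subtype of `O`) mirrors `B` (on `Q`), where all
finals and transitions of `B` live inside `O`. -/
structure Mirror (O : Set Q) (B : BlockAutomaton α Q)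
    (C : BlockAutomaton α {p : Q // p ∈ O}) : Prop where
  hBf : ∀ f ∈ B.final, f ∈ O
  hBt : ∀ t ∈ B.trans, t.1 ∈ O ∧ t.2.2 ∈ O
  hCf : C.final = {x | x.val ∈ B.final}
  hCt : C.trans = {t | (t.1.val, t.2.1, t.2.2.val) ∈ B.trans}

namespace Mirror

variable {O : Set Q} {B : BlockAutomaton α Q} {C : BlockAutomaton α {p : Q // p ∈ O}}

lemma reach_lift (M : Mirror O B C) {p r : Q} (h : B.Reach p r)
    (hp : p ∈ O) (hr : r ∈ O) : C.Reach ⟨p, hp⟩ ⟨r, hr⟩ := by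
  revert hp
  induction h using Relation.ReflTransGen.head_induction_on with
  | refl => intro _; exact Relation.ReflTransGen.refl
  | head h' hrest ih =>
      intro ha
      obtain ⟨b, hb⟩ := h'
      have hc := (M.hBt _ hb).2
      exact Relation.ReflTransGen.head ⟨b, by rw [M.hCt]; exact hb⟩ (ih hc)

lemma reach_proj (M : Mirror O B C) {x y : {p : Q // p ∈ O}} (h : C.Reach x y) :
    B.Reach x.val y.val := by
  induction h with
  | refl => exact Relation.ReflTransGen.refl
  | tail _ e ih =>
      obtain ⟨b, hb⟩ := e
      rw [M.hCt] at hb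
      exact ih.tail ⟨b, hb⟩

lemma orbit_sub (M : Mirror O B C) {p : Q} (hp : p ∈ O) : B.orbitOf p ⊆ O := by
  intro r hr
  rcases hr.1.cases_tail with h | ⟨c, _, e⟩
  · exact h ▸ hp
  · obtain ⟨b, hb⟩ := e
    exact (M.hBt _ hb).2

lemma orbitOf_eq (M : Mirror O B C) (x : {p : Q // p ∈ O}) :
    C.orbitOf x = {y | y.val ∈ B.orbitOf x.val} := by
  ext y
  constructor
  · intro hy
    exact ⟨M.reach_proj hy.1, M.reach_proj hy.2⟩
  · intro hy
    exact ⟨M.reach_lift hy.1 x.2 y.2, M.reach_lift hy.2 y.2 x.2⟩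

lemma gate_iff (M : Mirror O B C) {Ob : Set Q} {O' : Set {p : Q // p ∈ O}}
    (hO' : O' = {y | y.val ∈ Ob}) (y : {p : Q // p ∈ O}) :
    C.IsGate O' y ↔ B.IsGate Ob y.val := by
  subst hO'
  constructor
  · rintro ⟨hy, hfin | ⟨b, p, ht, hp⟩⟩
    · exact ⟨hy, Or.inl (by rw [M.hCf] at hfin; exact hfin)⟩
    · refine ⟨hy, Or.inr ⟨b, p.val, ?_, hp⟩⟩
      rw [M.hCt] at ht
      exact ht
  · rintro ⟨hy, hfin | ⟨b, p, ht, hp⟩⟩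
    · exact ⟨hy, Or.inl (by rw [M.hCf]; exact hfin)⟩
    · have hpO : p ∈ O := (M.hBt _ ht).2
      exact ⟨hy, Or.inr ⟨b, ⟨p, hpO⟩, by rw [M.hCt]; exact ht, hp⟩⟩

lemma orbAut_mirror (M : Mirror O B C) {Ob : Set Q} {O' : Set {p : Q // p ∈ O}}
    (hsub : Ob ⊆ O) (hO' : O' = {y | y.val ∈ Ob}) :
    Mirror O (B.orbAut Ob) (C.orbAut O') := by
  constructor
  · intro f hf
    exact hsub hf.1
  · intro t ht
    exact ⟨hsub ht.2.1, hsub ht.2.2⟩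
  · ext y
    simp only [orbAut, Set.mem_setOf_eq]
    exact M.gate_iff hO' y
  · ext t
    simp only [orbAut, Set.mem_setOf_eq, Set.sep_setOf, Set.mem_sep_iff, M.hCt, hO']

lemma trivial_lift (M : Mirror O B C) {Ob : Set Q} {O' : Set {p : Q // p ∈ O}}
    (hsub : Ob ⊆ O) (hO' : O' = {y | y.val ∈ Ob}) (h : B.TrivialOrbit Ob) :
    C.TrivialOrbit O' := by
  obtain ⟨p, hp, hns⟩ := h
  have hpOb : p ∈ Ob := by rw [hp]; exact rfl
  refine ⟨⟨p, hsub hpOb⟩, ?_, ?_⟩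
  · subst hO'
    ext y
    simp [hp, Subtype.ext_iff]
  · intro b hb
    rw [M.hCt] at hb
    exact hns b hb

lemma cut_step (M : Mirror O B C) (x₀ : {p : Q // p ∈ O}) {n : ℕ}
    (tr : ∀ (B' : BlockAutomaton α Q) (C' : BlockAutomaton α {p : Q // p ∈ O}),
      Mirror O B' C' → BWTestFuel n B' → BWTestFuel n C')
    (h : ∃ b s, (b, s) ∈ B.consist ∧ BWTestFuel n (B.cut b s)) :
    ∃ b s', (b, s') ∈ C.consist ∧ BWTestFuel n (C.cut b s') := by
  obtain ⟨b, s, ⟨hbne, hcons⟩, hfuel⟩ := h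
  by_cases hf : ∃ f, f ∈ B.final
  · obtain ⟨f, hfB⟩ := hf
    have hsO : s ∈ O := (M.hBt _ (hcons f hfB)).2
    refine ⟨b, ⟨s, hsO⟩, ⟨hbne, ?_⟩, tr _ _ ?_ hfuel⟩
    · intro x hx
      rw [M.hCf] at hx
      rw [M.hCt]
      exact hcons x.val hx
    · constructor
      · intro g hg; exact M.hBf g hg
      · intro t ht; exact M.hBt t ht.1
      · exact M.hCf
      · ext t
        simp only [cut, Set.mem_setOf_eq, M.hCt, M.hCf, Subtype.ext_iff]
  · push_neg at hf
    refine ⟨b, x₀, ⟨hbne, ?_⟩, tr _ _ ?_ hfuel⟩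
    · intro x hx
      rw [M.hCf] at hx
      exact absurd hx (hf x.val)
    · constructor
      · intro g hg; exact M.hBf g hg
      · intro t ht; exact M.hBt t ht.1
      · exact M.hCf
      · ext t
        simp only [cut, Set.mem_setOf_eq, M.hCt, M.hCf]
        constructor
        · rintro ⟨ht, -⟩
          exact ⟨ht, by rintro ⟨h1, -⟩; exact hf _ h1⟩
        · rintro ⟨ht, -⟩
          exact ⟨ht, by rintro ⟨h1, -⟩; exact hf _ h1⟩

end Mirror

lemma mirror_transfer (O : Set Q) :
    ∀ (n : ℕ) (B : BlockAutomaton α Q) (C : BlockAutomaton α {p : Q // p ∈ O}),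
      Mirror O B C → BWTestFuel n B → BWTestFuel n C := by
  intro n
  induction n with
  | zero => intro _ _ _ h; exact h.elim
  | succ n ih =>
      rintro B C M ⟨hOP, hcuts⟩
      refine ⟨?_, ?_⟩
      · rintro O' ⟨x, rfl⟩
        have hsub := M.orbit_sub x.2
        have hOeq := M.orbitOf_eq x
        have htv := hOP (B.orbitOf x.val) ⟨x.val, rfl⟩
        intro g1 g2 hg1 hg2
        rw [M.gate_iff hOeq] at hg1 hg2
        obtain ⟨hfin, hout⟩ := htv g1.val g2.val hg1 hg2
        constructor
        · rw [M.hCf]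
          exact hfin
        · intro b p hp
          rw [M.hCt]
          exact hout b p.val (fun hh => hp (by rw [hOeq]; exact hh))
      · rintro O' ⟨x, rfl⟩ hnt
        have hsub := M.orbit_sub x.2
        have hOeq := M.orbitOf_eq x
        have hntB : ¬ B.TrivialOrbit (B.orbitOf x.val) :=
          fun h => hnt (M.trivial_lift hsub hOeq h)
        exact (M.orbAut_mirror hsub hOeq).cut_step x ih
          (hcuts _ ⟨x.val, rfl⟩ hntB)

end BlockAutomaton

/-- If a block automaton passes the BW-test, then so does each of its
orbit automata. -/
theorem stmt13 {α Q : Type} [Fintype α] [Fintype Q]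
    (A : BlockAutomaton α Q) (hwf : A.IsWF) (hbw : BlockAutomaton.BWTest A) (q : Q) :
    BlockAutomaton.BWTest (A.orbAutAt q) := by
  classical
  open BlockAutomaton in
  obtain ⟨n, hn⟩ := hbw
  obtain ⟨m, rfl⟩ : ∃ m, n = m + 1 := by
    cases n with
    | zero => exact hn.elim
    | succ m => exact ⟨m, rfl⟩
  set O := A.orbitOf q with hOdef
  set C := A.orbAutAt q with hCdef
  have hq : q ∈ O := ⟨Relation.ReflTransGen.refl, Relation.ReflTransGen.refl⟩
  -- C's transitions are exactly the lifted internal transitions of O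
  have hCtrans : ∀ (t : {p : Q // p ∈ O} × List α × {p : Q // p ∈ O}),
      t ∈ C.trans ↔ (t.1.val, t.2.1, t.2.2.val) ∈ A.trans := fun _ => Iff.rfl
  have hCfinal : ∀ x : {p : Q // p ∈ O}, x ∈ C.final ↔ A.IsGate O x.val :=
    fun _ => Iff.rfl
  -- C is strongly connected
  have hreach : ∀ (x y : {p : Q // p ∈ O}), C.Reach x y := by
    intro x y
    obtain ⟨p, hp⟩ := x
    obtain ⟨r, hr⟩ := y
    have key : ∀ p (h : A.Reach p r) (hp : p ∈ O), C.Reach ⟨p, hp⟩ ⟨r, hr⟩ := by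
      intro p h
      induction h using Relation.ReflTransGen.head_induction_on with
      | refl => intro _; exact Relation.ReflTransGen.refl
      | @head a c h' hrest ih =>
          intro ha
          obtain ⟨b, hb⟩ := h'
          have hc : c ∈ O := ⟨ha.1.tail ⟨b, hb⟩, hrest.trans hr.2⟩
          exact Relation.ReflTransGen.head
            (show C.Edge ⟨a, ha⟩ ⟨c, hc⟩ from ⟨b, hb⟩) (ih hc)
    exact key p (hp.2.trans hr.1) hp
  have horb : ∀ x : {p : Q // p ∈ O}, C.orbitOf x = Set.univ :=
    fun x => Set.eq_univ_of_forall fun y => ⟨hreach x y, hreach y x⟩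
  have hgatefin : ∀ g : {p : Q // p ∈ O}, C.IsGate Set.univ g → g ∈ C.final := by
    rintro g ⟨-, hfin | ⟨b, p, -, hp⟩⟩
    · exact hfin
    · exact absurd (Set.mem_univ p) hp
  refine ⟨m + 1, ?_, ?_⟩
  · -- orbit property of C
    rintro O' ⟨x, rfl⟩
    rw [horb x]
    intro g1 g2 hg1 hg2
    refine ⟨?_, ?_⟩
    · simp [hgatefin g1 hg1, hgatefin g2 hg2]
    · intro b p hp
      exact absurd (Set.mem_univ p) hp
  · rintro O' ⟨x, rfl⟩ hnt
    rw [horb x] at hnt ⊢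
    have hntA : ¬ A.TrivialOrbit O := by
      rintro ⟨p, hOp, hns⟩
      have hpO : p ∈ O := by rw [hOp]; exact rfl
      refine hnt ⟨⟨p, hpO⟩, ?_, ?_⟩
      · ext y
        have h2 : y.val = p := by
          have h3 : y.val ∈ O := y.2
          rw [hOp] at h3
          exact h3
        simp [Subtype.ext_iff, h2]
      · intro b hb
        exact hns b hb
    have M : BlockAutomaton.Mirror O (A.orbAut O) (C.orbAut Set.univ) := by
      constructor
      · intro f hf
        exact hf.1
      · intro t ht
        exact ht.2
      · ext y
        simp only [BlockAutomaton.orbAut, Set.mem_setOf_eq]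
        constructor
        · intro hy
          exact hgatefin y hy
        · intro hy
          exact ⟨Set.mem_univ y, Or.inl hy⟩
      · ext t
        simp only [BlockAutomaton.orbAut, Set.mem_setOf_eq, Set.mem_univ,
          and_true, true_and]
        exact ⟨fun h => ⟨h, t.1.2, t.2.2.2⟩, fun h => h.1⟩
    exact M.cut_step ⟨q, hq⟩ (BlockAutomaton.mirror_transfer O m) (hn.2 O ⟨q, rfl⟩ hntA)
end
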